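/- Let H be a complex Hilbert space, T : H → H a compact linear operator such that 1 is not an eigenvalue of T. Let (m_n) be a sequence of bounded linear operators on H with sup_n ‖m_n‖ < ∞ and m_n → Id in the strong operator topology. Then there exists N such that for all n ≥ N the operator Id − m_n T is invertible (a bijective bounded operator with bounded inverse). -/

import Mathlib

/-!
By the Fredholm alternative, `1 - T` is invertible. A uniform bound on `‖m n‖` makes the family
`(m n)` equicontinuous, so pointwise convergence `m n → id` is uniform on the relatively compact
set `T '' closedBall 0 1`; that is, `m n ∘ T → T` in operator norm. Since the units of a Banach
algebra form an open set, `1 - m n ∘ T` is invertible for all large `n`.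
-/

open Filter Topology Metric

theorem IsCompactOperator.isUnit_one_sub {𝕜 X : Type*} [NontriviallyNormedField 𝕜]
    [NormedAddCommGroup X] [NormedSpace 𝕜 X] [CompleteSpace X] {T : X →L[𝕜] X}
    (hT : IsCompactOperator T) (hT1 : ∀ x, T x = x → x = 0) : IsUnit (1 - T) := by
  have h1 : (1 : 𝕜) ∉ spectrum 𝕜 T := by
    rw [← hT.hasEigenvalue_iff_mem_spectrum one_ne_zero]
    intro h
    obtain ⟨x, hx⟩ := h.exists_hasEigenvector
    exact hx.2 (hT1 x (by simpa using hx.apply_eq_smul))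
  simpa using spectrum.notMem_iff.1 h1

theorem ContinuousLinearMap.tendstoUniformlyOn_of_norm_le_of_tendsto {𝕜 E F ι : Type*}
    [NontriviallyNormedField 𝕜] [NormedAddCommGroup E] [NormedSpace 𝕜 E] [NormedAddCommGroup F]
    [NormedSpace 𝕜 F] {l : Filter ι} {m : ι → E →L[𝕜] F} {C : ℝ} (hC : ∀ i, ‖m i‖ ≤ C)
    {g : E → F} (hm : ∀ x, Tendsto (fun i => m i x) l (𝓝 (g x))) {K : Set E}
    (hK : IsCompact K) : TendstoUniformlyOn (fun i => ⇑(m i)) g l K := by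
  have : CompactSpace K := isCompact_iff_compactSpace.mp hK
  have hequi : Equicontinuous fun i (x : K) => m i x :=
    (LipschitzWith.uniformEquicontinuous _ C.toNNReal fun i =>
      ((m i).lipschitzWith_of_opNorm_le ((hC i).trans (Real.le_coe_toNNReal C))).restrict K
      ).equicontinuous
  rw [tendstoUniformlyOn_iff_tendstoUniformly_comp_coe]
  exact UniformFun.tendsto_iff_tendstoUniformly.1
    ((hequi.tendsto_uniformFun_iff_pi _ _).2 (tendsto_pi_nhds.2 fun x => hm x))

theorem IsCompactOperator.tendsto_comp_of_norm_le_of_tendsto {𝕜 E F G ι : Type*} [RCLike 𝕜]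
    [NormedAddCommGroup E] [NormedSpace 𝕜 E] [NormedAddCommGroup F] [NormedSpace 𝕜 F]
    [NormedAddCommGroup G] [NormedSpace 𝕜 G] {l : Filter ι} {T : E →L[𝕜] F}
    (hT : IsCompactOperator T) {m : ι → F →L[𝕜] G} {C : ℝ} (hC : ∀ i, ‖m i‖ ≤ C)
    {g : F →L[𝕜] G} (hm : ∀ y, Tendsto (fun i => m i y) l (𝓝 (g y))) :
    Tendsto (fun i => (m i).comp T) l (𝓝 (g.comp T)) := by
  have hunif := ContinuousLinearMap.tendstoUniformlyOn_of_norm_le_of_tendsto hC hm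
    (hT.isCompact_closure_image_closedBall 1)
  rw [Metric.tendsto_nhds]
  intro ε hε
  filter_upwards [Metric.tendstoUniformlyOn_iff.1 hunif (ε / 2) (half_pos hε)] with i hi
  rw [dist_eq_norm]
  refine lt_of_le_of_lt (ContinuousLinearMap.opNorm_le_of_unit_norm (half_pos hε).le
    fun x hx => ?_) (half_lt_self hε)
  have hTx : T x ∈ closure (T '' closedBall 0 1) := subset_closure ⟨x, by simp [hx], rfl⟩
  simpa [dist_eq_norm'] using (hi _ hTx).le

/-- Abstract invertibility lemma (Ellis–Pinsky): if `T` is compact, `1` is not an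
eigenvalue of `T`, and `m_n → Id` strongly with uniformly bounded norms, then
`Id - m_n T` is invertible for all large `n`. -/
theorem invertibility_of_id_sub_strong_limit_comp_compact
    {H : Type*} [NormedAddCommGroup H] [InnerProductSpace ℂ H] [CompleteSpace H]
    (T : H →L[ℂ] H) (hT : IsCompactOperator T)
    (hT1 : ∀ x : H, T x = x → x = 0)
    (m : ℕ → H →L[ℂ] H) (C : ℝ) (hC : ∀ n, ‖m n‖ ≤ C)
    (hconv : ∀ x : H, Tendsto (fun n => m n x) atTop (nhds x)) :
    ∃ N : ℕ, ∀ n ≥ N, IsUnit ((1 : H →L[ℂ] H) - (m n).comp T) := by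
  have hlim : Tendsto (fun n => 1 - (m n).comp T) atTop (𝓝 (1 - T)) := by
    simpa using (hT.tendsto_comp_of_norm_le_of_tendsto hC (g := ContinuousLinearMap.id ℂ H)
      hconv).const_sub 1
  exact eventually_atTop.1 (hlim.eventually (Units.isOpen.mem_nhds (hT.isUnit_one_sub hT1)))
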